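/- For every N ≥ 1 and all basis labels σ, τ ∈ {⇑,0,⇓}^N, the matrix entry ⟨τ|β|σ⟩ ∈ ℤ[y] of the operator β lies in y·ℤ[y²]; that is, ⟨τ|β|σ⟩ = y·p(y²) for some polynomial p with integer coefficients. (In other words, β applied to any canonical basis vector yields x^{1/2} times a vector of polynomials in x = y² with integer coefficients.) -/

import Mathlib

open Matrix BigOperators Finset Polynomial

noncomputable section

/-- The 6×6 matrix ρ over ℤ[y] on ℂ²⊗ℂ³, basis `(ε, σ)`, ε ∈ {0=↑,1=↓}, σ ∈ {0=⇑,1=0,2=⇓}. -/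
def rho : Matrix (Fin 2 × Fin 3) (Fin 2 × Fin 3) (Polynomial ℤ) :=
  Matrix.of fun p p' =>
    if p = (0,0) ∧ p' = (0,0) then 1
    else if p = (0,1) ∧ p' = (1,0) then Polynomial.X
    else if p = (0,2) ∧ p' = (0,2) then -1
    else if p = (0,2) ∧ p' = (1,1) then Polynomial.X
    else if p = (1,0) ∧ p' = (0,1) then Polynomial.X
    else if p = (1,0) ∧ p' = (1,0) then -1
    else if p = (1,1) ∧ p' = (0,2) then Polynomial.X
    else if p = (1,2) ∧ p' = (1,2) then 1
    else 0

/-- ρ acting on the auxiliary ℂ² and the j-th site of `(ℂ³)^{⊗N}`. -/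
def rhoAt {N : ℕ} (j : Fin N) :
    Matrix (Fin 2 × (Fin N → Fin 3)) (Fin 2 × (Fin N → Fin 3)) (Polynomial ℤ) :=
  Matrix.of fun p p' =>
    rho (p.1, p.2 j) (p'.1, p'.2 j) * if ∀ k, k ≠ j → p.2 k = p'.2 k then 1 else 0

/-- The operator β = ⟨↑| ρ_{a,N} ⋯ ρ_{a,1} |↓⟩ on `(ℂ³)^{⊗N}`, with entries in ℤ[y]. -/
def betaMat (N : ℕ) : Matrix (Fin N → Fin 3) (Fin N → Fin 3) (Polynomial ℤ) :=
  Matrix.of fun σ τ =>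
    ((((List.finRange N).reverse).map fun j => rhoAt j).prod :
      Matrix (Fin 2 × (Fin N → Fin 3)) (Fin 2 × (Fin N → Fin 3)) (Polynomial ℤ)) (0, σ) (1, τ)

/-- The reference state `|∧⟩ = |⇑…⇑⟩`, with coefficients in ℤ[y]. -/
def vacP (N : ℕ) : (Fin N → Fin 3) → Polynomial ℤ := fun σ => if σ = fun _ => 0 then 1 else 0

/-- The component `⟨τ|β^N|∧⟩ ∈ ℤ[y]`. -/
def comp (N : ℕ) (τ : Fin N → Fin 3) : Polynomial ℤ :=
  ((betaMat N ^ N).mulVec (vacP N)) τ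

/-! Substituting `y ↦ -y` in `ρ` is the same as conjugating it by `σᶻ` on the auxiliary factor:
the entries of `ρ` that flip the auxiliary spin are exactly its multiples of `y`, and the others
are constants. Both operations are multiplicative, so the monodromy product has the same symmetry,
and its `(↑, ↓)` block `β` is therefore odd in `y`. Over `ℤ` an odd polynomial is `y` times a
polynomial in `y²`. -/

namespace Polynomial

variable {R : Type*} [CommRing R]

theorem coeff_comp_neg_X (q : R[X]) (n : ℕ) :
    (q.comp (-X)).coeff n = (-1) ^ n * q.coeff n := by
  induction q using Polynomial.induction_on' with
  | add p q hp hq => simp [add_comp, hp, hq, mul_add]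
  | monomial k a =>
    rw [← C_mul_X_pow_eq_monomial, mul_comp, C_comp, X_pow_comp, neg_pow,
      show (-1 : R[X]) ^ k = C ((-1) ^ k) by simp, mul_left_comm, ← mul_assoc, ← C_mul,
      coeff_C_mul_X_pow, coeff_C_mul_X_pow]
    split_ifs with h <;> simp [h]

theorem exists_eq_X_mul_expand_of_comp_neg_X [IsAddTorsionFree R] {q : R[X]}
    (hq : q.comp (-X) = -q) : ∃ p : R[X], q = X * expand R 2 p := by
  have coeff_even : ∀ n, Even n → q.coeff n = 0 := fun n hn => by
    simpa [coeff_comp_neg_X, hn.neg_one_pow, self_eq_neg] using congrArg (coeff · n) hq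
  refine ⟨contract 2 q.divX, ext fun n => ?_⟩
  rcases n with _ | n
  · simpa using coeff_even 0 ⟨0, rfl⟩
  · rw [coeff_X_mul, coeff_expand two_pos]
    split_ifs with h
    · rw [coeff_contract two_ne_zero, coeff_divX, Nat.div_mul_cancel h]
    · exact coeff_even _ (by rw [Nat.even_add_one, even_iff_two_dvd]; exact h)

end Polynomial

section SpinFlip

variable (R : Type*) [CommRing R] (I : Type*) [Fintype I] [DecidableEq I]

/-- `σᶻ ⊗ 1`. -/
def auxSign : Matrix (Fin 2 × I) (Fin 2 × I) R[X] := diagonal fun p => (-1) ^ (p.1 : ℕ)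

theorem auxSign_mul_self : auxSign R I * auxSign R I = 1 := by
  simp [auxSign, diagonal_mul_diagonal, ← mul_pow]

def negXCovariant : Submonoid (Matrix (Fin 2 × I) (Fin 2 × I) R[X]) where
  carrier := {M | M.map (compRingHom (-X)) = auxSign R I * M * auxSign R I}
  one_mem' := by simp [auxSign_mul_self]
  mul_mem' {M M'} hM hM' := by
    simp only [Set.mem_ofPred_eq, Matrix.map_mul] at *
    rw [hM, hM']
    simp only [Matrix.mul_assoc, ← Matrix.mul_assoc (auxSign R I) (auxSign R I), auxSign_mul_self,
      Matrix.one_mul]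

variable {R I}

theorem mem_negXCovariant_iff {M : Matrix (Fin 2 × I) (Fin 2 × I) R[X]} :
    M ∈ negXCovariant R I ↔
      ∀ p q, (M p q).comp (-X) = (-1) ^ (p.1 : ℕ) * M p q * (-1) ^ (q.1 : ℕ) := by
  simp [negXCovariant, auxSign, ← Matrix.ext_iff, diagonal_mul, mul_diagonal]

end SpinFlip

theorem rho_comp_neg_X (a b : Fin 2) (s t : Fin 3) :
    (rho (a, s) (b, t)).comp (-X) = (-1) ^ (a : ℕ) * rho (a, s) (b, t) * (-1) ^ (b : ℕ) := by
  fin_cases a <;> fin_cases b <;> fin_cases s <;> fin_cases t <;> simp [rho]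

theorem rhoAt_mem_negXCovariant {N : ℕ} (j : Fin N) :
    rhoAt j ∈ negXCovariant ℤ (Fin N → Fin 3) := by
  rw [mem_negXCovariant_iff]
  intro p q
  simp only [rhoAt, of_apply, mul_comp, rho_comp_neg_X]
  split_ifs <;> simp [mul_right_comm]

theorem betaMat_comp_neg_X (N : ℕ) (σ τ : Fin N → Fin 3) :
    (betaMat N τ σ).comp (-X) = -betaMat N τ σ := by
  have hprod : (((List.finRange N).reverse).map rhoAt).prod ∈ negXCovariant ℤ _ :=
    Submonoid.list_prod_mem _ (by simpa using rhoAt_mem_negXCovariant)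
  simpa [betaMat] using mem_negXCovariant_iff.1 hprod (0, τ) (1, σ)

theorem stmt18_general (N : ℕ) (σ τ : Fin N → Fin 3) :
    ∃ p : Polynomial ℤ, betaMat N τ σ = Polynomial.X * p.comp (Polynomial.X ^ 2) :=
  Polynomial.exists_eq_X_mul_expand_of_comp_neg_X (betaMat_comp_neg_X N σ τ)

/-- Every matrix entry `⟨τ|β|σ⟩ ∈ ℤ[y]` lies in `y·ℤ[y²]`. -/
theorem stmt18 (N : ℕ) (hN : 1 ≤ N) (σ τ : Fin N → Fin 3) :
    ∃ p : Polynomial ℤ, betaMat N τ σ = Polynomial.X * p.comp (Polynomial.X ^ 2) :=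
  stmt18_general N σ τ

end
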